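/- For all t ∈ [π/3, π/2], Z̃(1,t) + Z̃(2,t) + min(Z̃(3,t), Z̃(4,t)) > 0, where Z̃(1,t) = log(φ)/(cos(t)²−1) − log(3)·√5(4cos(t)²−3)/(4cos(t)²−5)², Z̃(2,t) = log(φ)(320cos(t)²−140)/(16cos(t)²−25)² − log(7/3)·√5(4cos(t)²−3)/(4cos(t)²−5)², Z̃(3,t) = log(φ)(135cos(t)²+105)/(9cos(t)²−25)² − log(13/7)·√5(4cos(t)²−3)/(4cos(t)²−5)², Z̃(4,t) = log(φ)(8704cos(t)²+21896)/(64cos(t)²−289)² − log(21/13)·√5(4cos(t)²−3)/(4cos(t)²−5)². -/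
import Mathlib


open Real

set_option maxHeartbeats 1000000

noncomputable def phi : ℝ := (1 + Real.sqrt 5) / 2

noncomputable def Zt1 (t : ℝ) : ℝ :=
  Real.log phi / (Real.cos t ^ 2 - 1) -
    Real.log 3 * Real.sqrt 5 * (4 * Real.cos t ^ 2 - 3) / (4 * Real.cos t ^ 2 - 5) ^ 2

noncomputable def Zt2 (t : ℝ) : ℝ :=
  Real.log phi * (320 * Real.cos t ^ 2 - 140) / (16 * Real.cos t ^ 2 - 25) ^ 2 -
    Real.log (7 / 3) * Real.sqrt 5 * (4 * Real.cos t ^ 2 - 3) / (4 * Real.cos t ^ 2 - 5) ^ 2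

noncomputable def Zt3 (t : ℝ) : ℝ :=
  Real.log phi * (135 * Real.cos t ^ 2 + 105) / (9 * Real.cos t ^ 2 - 25) ^ 2 -
    Real.log (13 / 7) * Real.sqrt 5 * (4 * Real.cos t ^ 2 - 3) / (4 * Real.cos t ^ 2 - 5) ^ 2

noncomputable def Zt4 (t : ℝ) : ℝ :=
  Real.log phi * (8704 * Real.cos t ^ 2 + 21896) / (64 * Real.cos t ^ 2 - 289) ^ 2 -
    Real.log (21 / 13) * Real.sqrt 5 * (4 * Real.cos t ^ 2 - 3) / (4 * Real.cos t ^ 2 - 5) ^ 2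

lemma log_one_sub_bounds {x : ℝ} (h0 : 0 ≤ x) (h1 : x < 1) (n : ℕ) :
    -(∑ i ∈ Finset.range n, x ^ (i + 1) / (i + 1)) - x ^ (n + 1) / (1 - x) ≤ Real.log (1 - x) ∧
    Real.log (1 - x) ≤ -(∑ i ∈ Finset.range n, x ^ (i + 1) / (i + 1)) + x ^ (n + 1) / (1 - x) := by
  have h := Real.abs_log_sub_add_sum_range_le (x := x) (by rw [abs_of_nonneg h0]; exact h1) n
  rw [abs_of_nonneg h0] at h
  have h2 := abs_le.mp h
  constructor <;> linarith [h2.1, h2.2]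

lemma log3_bounds : (1.0986 : ℝ) ≤ Real.log 3 ∧ Real.log 3 ≤ 1.09862 := by
  have h := log_one_sub_bounds (x := 1/4) (by norm_num) (by norm_num) 12
  have e : Real.log (1 - (1/4 : ℝ)) = Real.log 3 - 2 * Real.log 2 := by
    rw [show (1:ℝ) - 1/4 = 3 / 2^2 by norm_num, Real.log_div (by norm_num) (by norm_num),
      Real.log_pow]
    push_cast; ring
  rw [e] at h
  norm_num [Finset.sum_range_succ] at h
  constructor <;> linarith [Real.log_two_gt_d9, Real.log_two_lt_d9, h.1, h.2]

lemma log7_bounds : (1.94591 : ℝ) ≤ Real.log 7 ∧ Real.log 7 ≤ 1.945911 := by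
  have h := log_one_sub_bounds (x := 1/8) (by norm_num) (by norm_num) 12
  have e : Real.log (1 - (1/8 : ℝ)) = Real.log 7 - 3 * Real.log 2 := by
    rw [show (1:ℝ) - 1/8 = 7 / 2^3 by norm_num, Real.log_div (by norm_num) (by norm_num),
      Real.log_pow]
    push_cast; ring
  rw [e] at h
  norm_num [Finset.sum_range_succ] at h
  constructor <;> linarith [Real.log_two_gt_d9, Real.log_two_lt_d9, h.1, h.2]

lemma log13_bounds : (2.56494 : ℝ) ≤ Real.log 13 ∧ Real.log 13 ≤ 2.56496 := by
  have h := log_one_sub_bounds (x := 3/16) (by norm_num) (by norm_num) 12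
  have e : Real.log (1 - (3/16 : ℝ)) = Real.log 13 - 4 * Real.log 2 := by
    rw [show (1:ℝ) - 3/16 = 13 / 2^4 by norm_num, Real.log_div (by norm_num) (by norm_num),
      Real.log_pow]
    push_cast; ring
  rw [e] at h
  norm_num [Finset.sum_range_succ] at h
  constructor <;> linarith [Real.log_two_gt_d9, Real.log_two_lt_d9, h.1, h.2]

lemma sqrt5_bounds : (3571/1597 : ℝ) ≤ Real.sqrt 5 ∧ Real.sqrt 5 ≤ 2207/987 := by
  have hs : Real.sqrt 5 ^ 2 = 5 := Real.sq_sqrt (by norm_num)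
  have hn := Real.sqrt_nonneg 5
  constructor
  · nlinarith [sq_nonneg (Real.sqrt 5 - 3571/1597), sq_nonneg (Real.sqrt 5 + 3571/1597)]
  · nlinarith [sq_nonneg (Real.sqrt 5 - 2207/987), sq_nonneg (Real.sqrt 5 + 2207/987)]

lemma logphi_bounds : (0.4812 : ℝ) ≤ Real.log phi ∧ Real.log phi ≤ 0.4813 := by
  have h5 := sqrt5_bounds
  have hlo : (2584/1597 : ℝ) ≤ phi := by unfold phi; linarith [h5.1]
  have hhi : phi ≤ (1597/987 : ℝ) := by unfold phi; linarith [h5.2]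
  have hL : Real.log (2584/1597) ≤ Real.log phi :=
    Real.log_le_log (by norm_num) hlo
  have hU : Real.log phi ≤ Real.log (1597/987) :=
    Real.log_le_log (by unfold phi; positivity) hhi
  have hlow := log_one_sub_bounds (x := 305/1597) (by norm_num) (by norm_num) 8
  have elow : Real.log (1 - (305/1597 : ℝ)) = Real.log (2584/1597) - Real.log 2 := by
    rw [show (1:ℝ) - 305/1597 = (2584/1597) / 2 by norm_num,
      Real.log_div (by norm_num) (by norm_num)]
  rw [elow] at hlow
  norm_num [Finset.sum_range_succ] at hlow
  have hhigh := log_one_sub_bounds (x := 377/1974) (by norm_num) (by norm_num) 8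
  have ehigh : Real.log (1 - (377/1974 : ℝ)) = Real.log (1597/987) - Real.log 2 := by
    rw [show (1:ℝ) - 377/1974 = (1597/987) / 2 by norm_num,
      Real.log_div (by norm_num) (by norm_num)]
  rw [ehigh] at hhigh
  norm_num [Finset.sum_range_succ] at hhigh
  constructor
  · linarith [Real.log_two_gt_d9, hlow.1, hL]
  · linarith [Real.log_two_lt_d9, hhigh.2, hU]

theorem Ztilde_sum_pos (t : ℝ) (ht : t ∈ Set.Icc (π / 3) (π / 2)) :
    Zt1 t + Zt2 t + min (Zt3 t) (Zt4 t) > 0 := by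
  obtain ⟨ht1, ht2⟩ := ht
  have hc0 : 0 ≤ Real.cos t := by
    apply Real.cos_nonneg_of_mem_Icc
    constructor
    · linarith [Real.pi_pos]
    · exact ht2
  have hc : Real.cos t ≤ 1/2 := by
    have := Real.cos_le_cos_of_nonneg_of_le_pi (by positivity) (by linarith [Real.pi_pos]) ht1
    rwa [Real.cos_pi_div_three] at this
  set x := Real.cos t ^ 2 with hxdef
  have hx0 : 0 ≤ x := sq_nonneg _
  have hx : x ≤ 1/4 := by nlinarith
  -- numerical constants
  obtain ⟨hφ1, hφ2⟩ := logphi_bounds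
  obtain ⟨h31, h32⟩ := log3_bounds
  obtain ⟨h71, h72⟩ := log7_bounds
  obtain ⟨h131, h132⟩ := log13_bounds
  obtain ⟨h51, h52⟩ := sqrt5_bounds
  have hs1 : (2.236 : ℝ) ≤ Real.sqrt 5 := by linarith
  have h73 : (0.847 : ℝ) ≤ Real.log (7/3) := by
    rw [Real.log_div (by norm_num) (by norm_num)]; linarith
  have h137 : (0.619 : ℝ) ≤ Real.log (13/7) := by
    rw [Real.log_div (by norm_num) (by norm_num)]; linarith
  have h2113 : (0.4795 : ℝ) ≤ Real.log (21/13) := by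
    rw [Real.log_div (by norm_num) (by norm_num),
      show (21:ℝ) = 3 * 7 by norm_num, Real.log_mul (by norm_num) (by norm_num)]
    linarith
  -- denominator facts
  have hd1 : x - 1 < 0 := by linarith
  have hd2 : (0:ℝ) < (4*x - 5)^2 := by nlinarith
  have hd3 : (0:ℝ) < (16*x - 25)^2 := by nlinarith
  have hd4 : (0:ℝ) < (9*x - 25)^2 := by nlinarith
  have hd5 : (0:ℝ) < (64*x - 289)^2 := by nlinarith
  -- term bounds
  have T1 : (-0.6418 : ℝ) ≤ Real.log phi / (x - 1) := by
    rw [le_div_iff_of_neg hd1]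
    linarith
  have key : (3 - 4*x) * 25 ≥ 3 * (4*x - 5)^2 := by nlinarith
  have T2 : Real.log 3 * Real.sqrt 5 * (4*x - 3) / (4*x - 5)^2 ≤ -0.2947 := by
    rw [div_le_iff₀ hd2]
    have p1 : (1.0986 : ℝ) * 2.236 ≤ Real.log 3 * Real.sqrt 5 :=
      mul_le_mul h31 hs1 (by norm_num) (by linarith)
    nlinarith [mul_le_mul_of_nonneg_right p1 (show (0:ℝ) ≤ 3 - 4*x by linarith)]
  have T3 : (-0.1079 : ℝ) ≤ Real.log phi * (320*x - 140) / (16*x - 25)^2 := by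
    rw [le_div_iff₀ hd3]
    nlinarith [mul_le_mul_of_nonpos_right hφ2 (show 320*x - 140 ≤ 0 by linarith)]
  have T4 : Real.log (7/3) * Real.sqrt 5 * (4*x - 3) / (4*x - 5)^2 ≤ -0.2272 := by
    rw [div_le_iff₀ hd2]
    have p1 : (0.847 : ℝ) * 2.236 ≤ Real.log (7/3) * Real.sqrt 5 :=
      mul_le_mul h73 hs1 (by norm_num) (by linarith)
    nlinarith [mul_le_mul_of_nonneg_right p1 (show (0:ℝ) ≤ 3 - 4*x by linarith)]
  have T5a : (0.0808 : ℝ) ≤ Real.log phi * (135*x + 105) / (9*x - 25)^2 := by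
    rw [le_div_iff₀ hd4]
    nlinarith [mul_le_mul_of_nonneg_right hφ1 (show (0:ℝ) ≤ 135*x + 105 by linarith)]
  have T6a : Real.log (13/7) * Real.sqrt 5 * (4*x - 3) / (4*x - 5)^2 ≤ -0.166 := by
    rw [div_le_iff₀ hd2]
    have p1 : (0.619 : ℝ) * 2.236 ≤ Real.log (13/7) * Real.sqrt 5 :=
      mul_le_mul h137 hs1 (by norm_num) (by linarith)
    nlinarith [mul_le_mul_of_nonneg_right p1 (show (0:ℝ) ≤ 3 - 4*x by linarith)]
  have T5b : (0.1261 : ℝ) ≤ Real.log phi * (8704*x + 21896) / (64*x - 289)^2 := by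
    rw [le_div_iff₀ hd5]
    nlinarith [mul_le_mul_of_nonneg_right hφ1 (show (0:ℝ) ≤ 8704*x + 21896 by linarith)]
  have T6b : Real.log (21/13) * Real.sqrt 5 * (4*x - 3) / (4*x - 5)^2 ≤ -0.1286 := by
    rw [div_le_iff₀ hd2]
    have p1 : (0.4795 : ℝ) * 2.236 ≤ Real.log (21/13) * Real.sqrt 5 :=
      mul_le_mul h2113 hs1 (by norm_num) (by linarith)
    nlinarith [mul_le_mul_of_nonneg_right p1 (show (0:ℝ) ≤ 3 - 4*x by linarith)]
  have h3 : Zt1 t + Zt2 t + Zt3 t > 0 := by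
    simp only [Zt1, Zt2, Zt3, ← hxdef]
    linarith
  have h4 : Zt1 t + Zt2 t + Zt4 t > 0 := by
    simp only [Zt1, Zt2, Zt4, ← hxdef]
    linarith
  rcases le_total (Zt3 t) (Zt4 t) with h | h
  · rw [min_eq_left h]; exact h3
  · rw [min_eq_right h]; exact h4
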